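/- For any θ ∈ ℝ, the maps H^θ : C([0,∞);ℝ) → C([0,∞);ℝ) (reflection after last visit to the line s ↦ θs/2, set to the identity on paths that visit the line at arbitrarily large times) and τ_frag : C([0,∞);ℝ)² → [0,∞] are Borel measurable. -/

import Mathlib

open MeasureTheory ProbabilityTheory Filter Set
open scoped ENNReal

noncomputable section

/-- Time inversion: `(I w)(t) = t * w(1/t)` for `t ≠ 0`, and `(I w)(0) = lim_{u→∞} w(u)/u`. -/
def invPath (w : ℝ → ℝ) : ℝ → ℝ := fun t =>
  if t = 0 then limUnder atTop (fun u => w u / u) else t * w (1 / t)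

/-- Last visit time of `w` to the line `s ↦ θ s / 2`, as an extended nonnegative real. -/
def lastVisit (θ : ℝ) (w : ℝ → ℝ) : ℝ≥0∞ :=
  sSup (ENNReal.ofReal '' {s : ℝ | 0 ≤ s ∧ w s = θ * s / 2})

/-- Reflection of `w` across the line `s ↦ θ s / 2` after the last visit of `w` to that line
(identity if `w` visits the line at arbitrarily large times). -/
def Hmap (θ : ℝ) (w : ℝ → ℝ) : ℝ → ℝ := fun t =>
  if ENNReal.ofReal t ≤ lastVisit θ w then w t else θ * t - w t

/-- Fragmentation time `inf {t ≥ 0 : w₁ t ≠ w₂ t}` with `inf ∅ = ∞`. -/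
def fragTime (w₁ w₂ : ℝ → ℝ) : ℝ≥0∞ :=
  sInf (ENNReal.ofReal '' {t : ℝ | 0 ≤ t ∧ w₁ t ≠ w₂ t})

/-- First hitting time of level `a` by the path `w`, with `inf ∅ = ∞`. -/
def firstHit (a : ℝ) (w : ℝ → ℝ) : ℝ≥0∞ :=
  sInf (ENNReal.ofReal '' {s : ℝ | 0 ≤ s ∧ w s = a})

/-- `B` is a standard Brownian motion (started at `0`, drift `0`) on `[0,∞)` under `P`. -/
def IsStandardBM {Ω : Type*} [MeasurableSpace Ω] (P : Measure Ω) (B : Ω → ℝ → ℝ) : Prop :=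
  (∀ t : ℝ, Measurable (fun ω => B ω t)) ∧
  (∀ᵐ ω ∂P, B ω 0 = 0) ∧
  (∀ᵐ ω ∂P, ContinuousOn (B ω) (Set.Ici 0)) ∧
  (∀ s t : ℝ, 0 ≤ s → s ≤ t →
    P.map (fun ω => B ω t - B ω s) = gaussianReal 0 (Real.toNNReal (t - s))) ∧
  (∀ (n : ℕ) (t : Fin (n + 1) → ℝ), Monotone t → 0 ≤ t 0 →
    iIndepFun
      (fun (i : Fin n) ω => B ω (t i.succ) - B ω (t i.castSucc)) P)

/-- `B` is a Brownian motion started at `δ` with drift `θ` under `P`. -/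
def IsBM {Ω : Type*} [MeasurableSpace Ω] (θ δ : ℝ) (P : Measure Ω) (B : Ω → ℝ → ℝ) : Prop :=
  IsStandardBM P (fun ω t => B ω t - θ * t - δ)

/-!
A map into `ℝ → ℝ` is measurable as soon as each evaluation is, so for `H^θ` it suffices that the
last-visit time is measurable. It exceeds a rational `q` iff the path meets the line `θ s / 2` at
some `s ≥ q`, a countable union over `n` of the conditions `∃ s ∈ [q, n], w s = θ s / 2`, which
are closed by compactness of `[q, n]`. The fragmentation time is upper semicontinuous, since
`τ_frag < c` is witnessed by one time at which the paths differ, an open condition; and path space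
is second countable, so upper semicontinuous functions on it are Borel.
-/

section

variable {X : Type*} [TopologicalSpace X]

theorem isClosed_setOf_exists_mem_compact {Y : Type*} [TopologicalSpace Y] {F : Set (X × Y)}
    (hF : IsClosed F) {K : Set Y} (hK : IsCompact K) :
    IsClosed {x | ∃ y ∈ K, (x, y) ∈ F} := by
  have : CompactSpace K := isCompact_iff_compactSpace.mp hK
  have hF' : IsClosed {p : X × K | (p.1, (p.2 : Y)) ∈ F} :=
    hF.preimage (continuous_fst.prodMk (continuous_subtype_val.comp continuous_snd))
  convert isClosedMap_fst_of_compactSpace _ hF' using 1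
  ext x
  simp

variable [MeasurableSpace X] [OpensMeasurableSpace X]

theorem measurableSet_setOf_exists_ge {F : Set (X × ℝ)} (hF : IsClosed F) (a : ℝ) :
    MeasurableSet {x | ∃ s, (x, s) ∈ F ∧ a ≤ s} := by
  have : {x | ∃ s, (x, s) ∈ F ∧ a ≤ s} = ⋃ n : ℕ, {x | ∃ s ∈ Icc a n, (x, s) ∈ F} := by
    ext x
    simp only [mem_ofPred_eq, mem_iUnion, mem_Icc]
    constructor
    · rintro ⟨s, hs, has⟩
      exact ⟨⌈s⌉₊, s, ⟨has, Nat.le_ceil s⟩, hs⟩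
    · rintro ⟨-, s, ⟨has, -⟩, hs⟩
      exact ⟨s, hs, has⟩
  rw [this]
  exact .iUnion fun n => (isClosed_setOf_exists_mem_compact hF isCompact_Icc).measurableSet

end

theorem lt_sSup_ofReal_image_iff {Z : Set ℝ} {c : ℝ≥0∞} :
    c < sSup (ENNReal.ofReal '' Z) ↔ ∃ q : ℚ, c < ENNReal.ofReal q ∧ ∃ s ∈ Z, (q : ℝ) ≤ s := by
  simp only [lt_sSup_iff, mem_image, exists_exists_and_eq_and]
  constructor
  · rintro ⟨s, hs, hcs⟩
    obtain ⟨q, -, hcq, hqs⟩ := ENNReal.lt_iff_exists_rat_btwn.mp hcs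
    exact ⟨q, hcq, s, hs, (ENNReal.ofReal_lt_ofReal_iff'.mp hqs).1.le⟩
  · rintro ⟨q, hcq, s, hs, hqs⟩
    exact ⟨s, hs, hcq.trans_le (ENNReal.ofReal_le_ofReal hqs)⟩

theorem measurable_sSup_ofReal_image {X : Type*} [MeasurableSpace X] {Z : X → Set ℝ}
    (hZ : ∀ q : ℚ, MeasurableSet {x | ∃ s ∈ Z x, (q : ℝ) ≤ s}) :
    Measurable fun x => sSup (ENNReal.ofReal '' Z x) := by
  refine measurable_of_Ioi fun c => ?_
  have : (fun x => sSup (ENNReal.ofReal '' Z x)) ⁻¹' Ioi c =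
      ⋃ (q : ℚ) (_ : c < ENNReal.ofReal q), {x | ∃ s ∈ Z x, (q : ℝ) ≤ s} := by
    ext x
    simp [lt_sSup_ofReal_image_iff]
  rw [this]
  exact .iUnion fun q => .iUnion fun _ => hZ q

theorem upperSemicontinuous_sInf_image {X ι α : Type*} [TopologicalSpace X]
    [CompleteLinearOrder α] {S : X → Set ι} (hS : ∀ i, IsOpen {x | i ∈ S x}) (g : ι → α) :
    UpperSemicontinuous fun x => sInf (g '' S x) := by
  intro x c hc
  obtain ⟨-, ⟨i, hi, rfl⟩, hic⟩ := sInf_lt_iff.mp hc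
  filter_upwards [(hS i).mem_nhds hi] with y hy
  exact (sInf_le (mem_image_of_mem g hy)).trans_lt hic

section

variable [MeasurableSpace C(ℝ, ℝ)] [BorelSpace C(ℝ, ℝ)]

theorem measurable_lastVisit (θ : ℝ) : Measurable fun w : C(ℝ, ℝ) => lastVisit θ w := by
  have hF : IsClosed {p : C(ℝ, ℝ) × ℝ | 0 ≤ p.2 ∧ p.1 p.2 = θ * p.2 / 2} :=
    (isClosed_le continuous_const continuous_snd).inter
      (isClosed_eq continuous_eval (by fun_prop))
  exact measurable_sSup_ofReal_image fun q => measurableSet_setOf_exists_ge hF q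

theorem measurable_Hmap (θ : ℝ) : Measurable fun w : C(ℝ, ℝ) => (Hmap θ w : ℝ → ℝ) := by
  refine measurable_pi_lambda _ fun t => ?_
  have hev : Measurable fun w : C(ℝ, ℝ) => w t := (continuous_eval_const t).measurable
  exact Measurable.ite (measurable_lastVisit θ measurableSet_Ici) hev (measurable_const.sub hev)

theorem measurable_fragTime : Measurable fun p : C(ℝ, ℝ) × C(ℝ, ℝ) => fragTime p.1 p.2 := by
  refine (upperSemicontinuous_sInf_image (fun t => ?_) ENNReal.ofReal).measurable
  exact isOpen_const.and (isOpen_ne_fun ((continuous_eval_const t).comp continuous_fst)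
    ((continuous_eval_const t).comp continuous_snd))

end

/-- for every `θ`, the map `H^θ` on continuous paths and the fragmentation time
`τ_frag` on pairs of continuous paths are Borel measurable (path space carries the topology of
uniform convergence on compacts, i.e. the compact-open topology, and its Borel σ-algebra). -/
theorem Hmap_fragTime_measurable (θ : ℝ)
    [MeasurableSpace C(ℝ, ℝ)] [BorelSpace C(ℝ, ℝ)] :
    Measurable (fun w : C(ℝ, ℝ) => (Hmap θ ⇑w : ℝ → ℝ)) ∧
    Measurable (fun p : C(ℝ, ℝ) × C(ℝ, ℝ) => fragTime ⇑p.1 ⇑p.2) :=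
  ⟨measurable_Hmap θ, measurable_fragTime⟩
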